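/- arXiv:2309.12681 — 4 statements merged into one kernel-verified Lean document; each statement's English description precedes it below -/
import Mathlib

section
/- On n qubits, let U(φ, ω) = (⊗_{i=1}^n R_X(φ_i)) · (⊗_{i=1}^n R_Y(ω_i)) with R_X(t) = exp(−iXt/2) and R_Y(t) = exp(−iYt/2), let ρ = (|0⟩⟨0|)^{⊗n}, and let L_α(φ, ω) = Tr(U(φ,ω) ρ U(φ,ω)† P_α) with (φ, ω) uniform on [−π,π]^{2n}. Then: (i) for any Pauli string P_α with α_i ∈ {0,1} for all i (an X-string) having k ≥ 1 non-identity factors, Var[L_α] = (1/2)^k; and (ii) for any Pauli string P_α with α_i ∈ {0,3} for all i (a Z-string) having k ≥ 1 non-identity factors, Var[L_α] = (1/4)^k. In particular, the upper bound Var[L_α] ≤ (1/2)^{|α|} and lower bound Var[L_α] ≥ Ω(ρ)(1/4)^{|α|} are saturated by explicit circuit–observable pairs. -/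
open MeasureTheory Matrix Finset
open scoped ComplexOrder

noncomputable section

/-- The space of `n`-qubit operators: matrices indexed by bitstrings. -/
abbrev QMat (n : ℕ) := Matrix (Fin n → Fin 2) (Fin n → Fin 2) ℂ

/-- The single-qubit Pauli matrices `σ_0 = I`, `σ_1 = X`, `σ_2 = Y`, `σ_3 = Z`. -/
def pauli : Fin 4 → Matrix (Fin 2) (Fin 2) ℂ :=
  ![1, !![0, 1; 1, 0], !![0, -Complex.I; Complex.I, 0], !![1, 0; 0, -1]]

/-- Tensor product `M 0 ⊗ ⋯ ⊗ M (n-1)` of a family of single-qubit operators. -/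
def tensorFamily {n : ℕ} (M : Fin n → Matrix (Fin 2) (Fin 2) ℂ) : QMat n :=
  Matrix.of fun x y => ∏ i, M i (x i) (y i)

/-- The Pauli string `P_α = σ_{α 0} ⊗ ⋯ ⊗ σ_{α (n-1)}`. -/
def pauliString {n : ℕ} (α : Fin n → Fin 4) : QMat n :=
  tensorFamily fun i => pauli (α i)

/-- The single-qubit rotation `R_{σ_a}(t) = exp(-i σ_a t / 2)`. -/
def rot1 (a : Fin 4) (t : ℝ) : Matrix (Fin 2) (Fin 2) ℂ :=
  NormedSpace.exp ((-(Complex.I * (t / 2))) • pauli a)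

/-- The rotation gate `R_P(t) = exp(-i P t / 2)` generated by `P`. -/
def rotGate {n : ℕ} (P : QMat n) (t : ℝ) : QMat n :=
  NormedSpace.exp ((-(Complex.I * (t / 2))) • P)

/-- A Clifford gate: a unitary `W` such that `Wᴴ P_α W` is a Pauli string up to sign. -/
def IsCliffordGate {n : ℕ} (W : QMat n) : Prop :=
  W * Wᴴ = 1 ∧ Wᴴ * W = 1 ∧
    ∀ α : Fin n → Fin 4, ∃ β : Fin n → Fin 4,
      Wᴴ * pauliString α * W = pauliString β ∨ Wᴴ * pauliString α * W = -pauliString β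

/-- The data of an `m`-parameter circuit in the class `𝒰` on `n` qubits:
`U(θ) = A(θ_{2n+1..m}) * B(θ_{n+1..2n}) * C(θ_{1..n})` where `C` and `B` are layers of
single-qubit rotations with pointwise orthogonal (distinct, non-identity) axes `ν`, `μ`, and
`A` is an alternating product of Clifford gates and Pauli-string rotations, one fresh
parameter per rotation. -/
structure Ansatz (n m : ℕ) where
  K : ℕ
  hm : m = 2 * n + K
  ν : Fin n → Fin 4
  μ : Fin n → Fin 4
  hν : ∀ i, ν i ≠ 0
  hμ : ∀ i, μ i ≠ 0
  hμν : ∀ i, μ i ≠ ν i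
  W : Fin K → QMat n
  hW : ∀ k, IsCliffordGate (W k)
  P : Fin K → Fin n → Fin 4

/-- The unitary implemented by the circuit at parameters `θ`. -/
def Ansatz.U {n m : ℕ} (A : Ansatz n m) (θ : Fin m → ℝ) : QMat n :=
  (List.ofFn fun k : Fin A.K =>
      A.W k * rotGate (pauliString (A.P k))
        (θ ⟨2 * n + (k : ℕ), by have h1 := A.hm; have h2 := k.isLt; omega⟩)).prod *
  tensorFamily (fun i => rot1 (A.μ i)
      (θ ⟨n + (i : ℕ), by have h1 := A.hm; have h2 := i.isLt; omega⟩)) *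
  tensorFamily (fun i => rot1 (A.ν i)
      (θ ⟨(i : ℕ), by have h1 := A.hm; have h2 := i.isLt; omega⟩))

/-- `ρ` is a density matrix: positive semidefinite with unit trace. -/
def IsDensityMatrix {n : ℕ} (ρ : QMat n) : Prop :=
  ρ.PosSemidef ∧ ρ.trace = 1

/-- The loss term `L_α(θ) = Tr(U(θ) ρ U(θ)† P_α)` (a real number). -/
def lossTerm {n m : ℕ} (A : Ansatz n m) (ρ : QMat n) (α : Fin n → Fin 4)
    (θ : Fin m → ℝ) : ℝ :=
  ((A.U θ * ρ * (A.U θ)ᴴ * pauliString α).trace).re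

/-- Expectation of `f` with `θ` uniform on `[-π, π]^ι`. -/
def unifExp {ι : Type*} [Fintype ι] (f : (ι → ℝ) → ℝ) : ℝ :=
  (2 * Real.pi)⁻¹ ^ (Fintype.card ι) *
    ∫ θ in Set.univ.pi fun _ : ι => Set.Icc (-Real.pi) Real.pi, f θ

/-- Variance of `f` with `θ` uniform on `[-π, π]^ι`. -/
def unifVar {ι : Type*} [Fintype ι] (f : (ι → ℝ) → ℝ) : ℝ :=
  unifExp (fun θ => f θ ^ 2) - unifExp f ^ 2

/-- The point of `{0, π/2}^ι` encoded by a boolean vector. -/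
def discPt {ι : Type*} (s : ι → Bool) : ι → ℝ :=
  fun i => if s i then Real.pi / 2 else 0

end

/-- The circuit `U(φ, ω) = (⊗_i R_X(φ_i)) · (⊗_i R_Y(ω_i))`, with `θ = (φ, ω) ∈ ℝ^{2n}`
(first `n` coordinates `φ`, last `n` coordinates `ω`). -/
noncomputable def xyCircuit (n : ℕ) (θ : Fin (2 * n) → ℝ) : QMat n :=
  tensorFamily (fun i => rot1 1 (θ ⟨(i : ℕ), by have := i.isLt; omega⟩)) *
  tensorFamily (fun i => rot1 2 (θ ⟨n + (i : ℕ), by have := i.isLt; omega⟩))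

/-! The state `R_X(φ) R_Y(ω) |0⟩` has Bloch vector `(sin ω, -sin φ cos ω, cos φ cos ω)`, so for a
product input and a layer of single-qubit rotations the loss `L_α` is a product over the qubits
of one Bloch-vector component each, and every component is a function of `φ_i` times a function
of `ω_i`. The `2n` angles are independent, so the mean and the second moment of `L_α` factor into
one-dimensional integrals over `[-π, π]`. A non-identity factor has mean zero, so `E[L_α] = 0`,
and `E[L_α²]` picks up `E[sin²] = 1/2` from each `X` and `E[cos²]² = 1/4` from each `Z`. -/

theorem NormedSpace.exp_smul_of_mul_self_eq_one {A : Type*} [Ring A] [Algebra ℂ A]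
    [TopologicalSpace A] [IsTopologicalRing A] [ContinuousSMul ℂ A] [T2Space A] {P : A}
    (hP : P * P = 1) (z : ℂ) :
    NormedSpace.exp (z • P) = Complex.cosh z • 1 + Complex.sinh z • P := by
  rw [NormedSpace.exp_eq_tsum ℂ]
  refine HasSum.tsum_eq (HasSum.even_add_odd ?_ ?_)
  · convert (Complex.hasSum_cosh z).smul_const (1 : A) using 2 with k
    rw [smul_pow, pow_mul P, sq P, hP, one_pow, smul_smul, div_eq_inv_mul]
  · convert (Complex.hasSum_sinh z).smul_const P using 2 with k
    rw [smul_pow, pow_succ P, pow_mul P, sq P, hP, one_pow, one_mul, smul_smul, div_eq_inv_mul]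

theorem pauli_mul_self (a : Fin 4) : pauli a * pauli a = 1 := by
  fin_cases a <;> ext i j <;> fin_cases i <;> fin_cases j <;> simp [pauli, Matrix.mul_apply]

theorem rot1_eq (a : Fin 4) (t : ℝ) :
    rot1 a t = (Real.cos (t / 2) : ℂ) • 1 - (Complex.I * Real.sin (t / 2)) • pauli a := by
  rw [rot1, NormedSpace.exp_smul_of_mul_self_eq_one (pauli_mul_self a), Complex.cosh_neg,
    Complex.sinh_neg, mul_comm, Complex.cosh_mul_I, Complex.sinh_mul_I]
  push_cast
  rw [neg_smul, sub_eq_add_neg, mul_comm]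

theorem rot1_one_eq (t : ℝ) : rot1 1 t =
    !![(Real.cos (t / 2) : ℂ), -Complex.I * Real.sin (t / 2);
       -Complex.I * Real.sin (t / 2), (Real.cos (t / 2) : ℂ)] := by
  rw [rot1_eq]
  ext i j; fin_cases i <;> fin_cases j <;> simp [pauli]

theorem rot1_two_eq (t : ℝ) : rot1 2 t =
    !![(Real.cos (t / 2) : ℂ), -(Real.sin (t / 2) : ℂ);
       (Real.sin (t / 2) : ℂ), (Real.cos (t / 2) : ℂ)] := by
  rw [rot1_eq]
  ext i j; fin_cases i <;> fin_cases j <;> simp [pauli, mul_right_comm _ _ Complex.I]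

/-- `blochPhi a φ * blochOmega a ω` is the `σ_a`-component of the Bloch vector of
`R_X(φ) R_Y(ω) |0⟩` (with component `1` along `σ_0`). -/
noncomputable def blochPhi : Fin 4 → ℝ → ℝ :=
  ![fun _ => 1, fun _ => 1, fun φ => -Real.sin φ, Real.cos]

noncomputable def blochOmega : Fin 4 → ℝ → ℝ :=
  ![fun _ => 1, Real.sin, Real.cos, Real.cos]

theorem conjTranspose_fin_two_of {R : Type*} [Star R] (a b c d : R) :
    !![a, b; c, d]ᴴ = !![star a, star c; star b, star d] := by
  ext i j; fin_cases i <;> fin_cases j <;> rfl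

theorem trace_rotXY_pauli (a : Fin 4) (φ ω : ℝ) :
    (rot1 1 φ * rot1 2 ω * !![1, 0; 0, 0] * (rot1 1 φ * rot1 2 ω)ᴴ * pauli a).trace =
      ((blochPhi a φ * blochOmega a ω : ℝ) : ℂ) := by
  obtain ⟨u, rfl⟩ : ∃ u, φ = 2 * u := ⟨φ / 2, by ring⟩
  obtain ⟨v, rfl⟩ : ∃ v, ω = 2 * v := ⟨ω / 2, by ring⟩
  rw [rot1_one_eq, rot1_two_eq, mul_div_cancel_left₀ u two_ne_zero,
    mul_div_cancel_left₀ v two_ne_zero]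
  have hu : (Real.cos u : ℂ) ^ 2 + (Real.sin u : ℂ) ^ 2 = 1 := by
    exact_mod_cast Real.cos_sq_add_sin_sq u
  have hv : (Real.cos v : ℂ) ^ 2 + (Real.sin v : ℂ) ^ 2 = 1 := by
    exact_mod_cast Real.cos_sq_add_sin_sq v
  have hI := Complex.I_sq
  fin_cases a <;>
    simp [blochPhi, blochOmega, pauli, conjTranspose_fin_two_of, Matrix.trace_fin_two_of,
      -Complex.ofReal_cos, -Complex.ofReal_sin, Real.sin_two_mul, Real.cos_two_mul'] <;>
    grind

theorem tensorFamily_mul {n : ℕ} (M N : Fin n → Matrix (Fin 2) (Fin 2) ℂ) :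
    tensorFamily M * tensorFamily N = tensorFamily fun i => M i * N i := by
  ext x y
  simp only [tensorFamily, Matrix.mul_apply, Matrix.of_apply, Finset.prod_mul_distrib,
    Fintype.prod_sum fun i (j : Fin 2) => M i (x i) j * N i j (y i)]

theorem tensorFamily_conjTranspose {n : ℕ} (M : Fin n → Matrix (Fin 2) (Fin 2) ℂ) :
    (tensorFamily M)ᴴ = tensorFamily fun i => (M i)ᴴ := by
  ext x y
  simp [tensorFamily, Matrix.conjTranspose_apply]

theorem trace_tensorFamily {n : ℕ} (M : Fin n → Matrix (Fin 2) (Fin 2) ℂ) :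
    (tensorFamily M).trace = ∏ i, (M i).trace := by
  simp only [Matrix.trace, Matrix.diag, tensorFamily, Matrix.of_apply,
    Fintype.prod_sum fun i (j : Fin 2) => M i j j]

theorem xyCircuit_loss_eq_prod (n : ℕ) (α : Fin n → Fin 4) (θ : Fin (2 * n) → ℝ) :
    ((xyCircuit n θ * tensorFamily (fun _ => !![1, 0; 0, 0]) * (xyCircuit n θ)ᴴ *
        pauliString α).trace).re =
      ∏ i : Fin n,
        blochPhi (α i) (θ ⟨i, by omega⟩) * blochOmega (α i) (θ ⟨n + i, by omega⟩) := by
  rw [xyCircuit, pauliString, tensorFamily_mul, tensorFamily_conjTranspose, tensorFamily_mul,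
    tensorFamily_mul, tensorFamily_mul, trace_tensorFamily]
  simp_rw [trace_rotXY_pauli]
  rw [← Complex.ofReal_prod, Complex.ofReal_re]

noncomputable def unifMean (f : ℝ → ℝ) : ℝ :=
  (2 * Real.pi)⁻¹ * ∫ t in -Real.pi..Real.pi, f t

theorem unifExp_prod {ι : Type*} [Fintype ι] (h : ι → ℝ → ℝ) :
    unifExp (fun θ : ι → ℝ => ∏ j, h j (θ j)) = ∏ j, unifMean (h j) := by
  rw [unifExp, volume_pi, Measure.restrict_pi_pi, integral_fintype_prod_eq_prod]
  simp only [unifMean, integral_Icc_eq_integral_Ioc,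
    intervalIntegral.integral_of_le (neg_le_self Real.pi_pos.le), Finset.prod_mul_distrib,
    Finset.prod_const, Finset.card_univ]

theorem Fin.prod_univ_two_mul {M : Type*} [CommMonoid M] (n : ℕ) (F : Fin (2 * n) → M) :
    ∏ j, F j = ∏ i : Fin n, F ⟨i, by omega⟩ * F ⟨n + i, by omega⟩ := by
  rw [← (finCongr (two_mul n)).symm.prod_comp, Fin.prod_univ_add, ← Finset.prod_mul_distrib]
  rfl

theorem unifExp_prod_mul (n : ℕ) (f g : Fin n → ℝ → ℝ) :
    unifExp (fun θ : Fin (2 * n) → ℝ =>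
        ∏ i : Fin n, f i (θ ⟨i, by omega⟩) * g i (θ ⟨n + i, by omega⟩)) =
      ∏ i, unifMean (f i) * unifMean (g i) := by
  set h : Fin (2 * n) → ℝ → ℝ :=
    fun j => if hj : (j : ℕ) < n then f ⟨j, hj⟩ else g ⟨j - n, by omega⟩
  have h_lo : ∀ i : Fin n, h ⟨i, by omega⟩ = f i := fun i => dif_pos i.isLt
  have h_hi : ∀ i : Fin n, h ⟨n + i, by omega⟩ = g i := fun i => by simp [h]
  calc _ = unifExp (fun θ : Fin (2 * n) → ℝ => ∏ j, h j (θ j)) := by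
        simp_rw [Fin.prod_univ_two_mul n, h_lo, h_hi]
    _ = ∏ i, unifMean (f i) * unifMean (g i) := by
        rw [unifExp_prod, Fin.prod_univ_two_mul n]
        simp_rw [h_lo, h_hi]

theorem unifMean_const (c : ℝ) : unifMean (fun _ => c) = c := by
  rw [unifMean, intervalIntegral.integral_const, smul_eq_mul, sub_neg_eq_add, ← two_mul,
    inv_mul_cancel_left₀ (by positivity)]

theorem unifMean_neg (f : ℝ → ℝ) : unifMean (fun t => -f t) = -unifMean f := by
  rw [unifMean, unifMean, intervalIntegral.integral_neg, mul_neg]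

theorem unifMean_sin : unifMean Real.sin = 0 := by
  simp [unifMean]

theorem unifMean_cos : unifMean Real.cos = 0 := by
  simp [unifMean]

theorem unifMean_sin_sq : unifMean (fun t => Real.sin t ^ 2) = 1 / 2 := by
  simp [unifMean, integral_sin_sq]
  field_simp

theorem unifMean_cos_sq : unifMean (fun t => Real.cos t ^ 2) = 1 / 2 := by
  simp [unifMean, integral_cos_sq]
  field_simp

theorem unifMean_blochPhi_mul_unifMean_blochOmega {a : Fin 4} (ha : a ≠ 0) :
    unifMean (blochPhi a) * unifMean (blochOmega a) = 0 := by
  fin_cases a <;>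
    simp_all [blochPhi, blochOmega, unifMean_neg, unifMean_sin, unifMean_cos]

noncomputable def xyVarianceWeight : Fin 4 → ℝ := ![1, 1 / 2, 1 / 4, 1 / 4]

theorem unifMean_blochPhi_sq_mul_unifMean_blochOmega_sq (a : Fin 4) :
    unifMean (fun t => blochPhi a t ^ 2) * unifMean (fun t => blochOmega a t ^ 2) =
      xyVarianceWeight a := by
  fin_cases a <;>
    simp [blochPhi, blochOmega, xyVarianceWeight, unifMean_const, unifMean_sin_sq,
      unifMean_cos_sq] <;>
    norm_num

theorem unifVar_xyCircuit_loss (n : ℕ) (α : Fin n → Fin 4) (hα : ∃ i, α i ≠ 0) :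
    unifVar (fun θ : Fin (2 * n) → ℝ =>
        ((xyCircuit n θ * tensorFamily (fun _ => !![1, 0; 0, 0]) * (xyCircuit n θ)ᴴ *
          pauliString α).trace).re) = ∏ i, xyVarianceWeight (α i) := by
  obtain ⟨i, hi⟩ := hα
  have h_mean : ∏ i, unifMean (blochPhi (α i)) * unifMean (blochOmega (α i)) = 0 :=
    Finset.prod_eq_zero (Finset.mem_univ i) (unifMean_blochPhi_mul_unifMean_blochOmega hi)
  simp only [unifVar, xyCircuit_loss_eq_prod, ← Finset.prod_pow, mul_pow]
  rw [unifExp_prod_mul, h_mean,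
    unifExp_prod_mul n (fun i t => blochPhi (α i) t ^ 2) fun i t => blochOmega (α i) t ^ 2]
  simp [unifMean_blochPhi_sq_mul_unifMean_blochOmega_sq]

theorem prod_xyVarianceWeight_eq_pow {n : ℕ} (α : Fin n → Fin 4) (c : ℝ)
    (hc : ∀ i, α i ≠ 0 → xyVarianceWeight (α i) = c) :
    ∏ i, xyVarianceWeight (α i) = c ^ (Finset.univ.filter fun i => α i ≠ 0).card := by
  rw [← Finset.prod_filter_mul_prod_filter_not Finset.univ fun i => α i ≠ 0,
    Finset.prod_congr rfl fun i hi => hc i (Finset.mem_filter.mp hi).2, Finset.prod_const,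
    Finset.prod_eq_one fun i hi => by simp_all [xyVarianceWeight], mul_one]

/-- For `U(φ,ω) = (⊗ R_X(φ_i)) (⊗ R_Y(ω_i))` and `ρ = (|0⟩⟨0|)^{⊗n}`,
with `(φ, ω)` uniform on `[-π,π]^{2n}`: (i) for any X-string `P_α` (all `α_i ∈ {0,1}`) with
`k ≥ 1` non-identity factors, `Var[L_α] = (1/2)^k`; (ii) for any Z-string `P_α` (all
`α_i ∈ {0,3}`) with `k ≥ 1` non-identity factors, `Var[L_α] = (1/4)^k`. In particular the
upper bound `(1/2)^{|α|}` and lower bound `Ω(ρ)(1/4)^{|α|}` of the main theorem are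
saturated by explicit circuit–observable pairs. -/
theorem xyCircuit_variance_saturates_bounds (n : ℕ) (α : Fin n → Fin 4) (k : ℕ)
    (hk : k = (Finset.univ.filter fun i => α i ≠ 0).card) (hk1 : 1 ≤ k) :
    ((∀ i, α i = 0 ∨ α i = 1) →
      unifVar (fun θ : Fin (2 * n) → ℝ =>
        ((xyCircuit n θ * tensorFamily (fun _ => !![1, 0; 0, 0]) * (xyCircuit n θ)ᴴ *
          pauliString α).trace).re) = (1 / 2 : ℝ) ^ k) ∧
    ((∀ i, α i = 0 ∨ α i = 3) →
      unifVar (fun θ : Fin (2 * n) → ℝ =>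
        ((xyCircuit n θ * tensorFamily (fun _ => !![1, 0; 0, 0]) * (xyCircuit n θ)ᴴ *
          pauliString α).trace).re) = (1 / 4 : ℝ) ^ k) := by
  obtain ⟨i, hi⟩ := Finset.card_pos.mp (hk ▸ hk1)
  rw [unifVar_xyCircuit_loss n α ⟨i, (Finset.mem_filter.mp hi).2⟩, hk]
  refine ⟨fun hX => prod_xyVarianceWeight_eq_pow α _ fun j hj => ?_,
    fun hZ => prod_xyVarianceWeight_eq_pow α _ fun j hj => ?_⟩
  · rw [(hX j).resolve_left hj]; rfl
  · rw [(hZ j).resolve_left hj]; rfl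
end

section
/- Let (f_x)_{x ∈ {0,1}^n} be a finite family of square-integrable real random variables whose joint law is invariant under simultaneous sign flip (i.e., (f_x)_x and (−f_x)_x are equal in distribution), let γ ∈ ℝ, and let s : {0,1}^n → {−1, 1} be any sign function. Then E[∑_{x,y} s(x)s(y) R_γ(f_x) R_γ(f_y)] = ((1+γ)²/4) · E[∑_{x,y} s(x)s(y) f_x f_y] + ((1−γ)²/4) · E[(∑_x s(x)|f_x|)²]; in particular, E[∑_{x,y} s(x)s(y) R_γ(f_x) R_γ(f_y)] ≥ ((1+γ)²/4) · E[∑_{x,y} s(x)s(y) f_x f_y], where R_γ(t) = max(t, γt) is the leaky-ReLU function. -/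
/-!
Since `R_γ(t) = a t + b |t|` with `a = (1+γ)/2` and `b = |1-γ|/2`, the double sum on the
left is `(a T + b A)²`, where `T = ∑ₓ s(x) f_x` and `A = ∑ₓ s(x) |f_x|`. The cross term
`T A` is an odd function of `(f_x)ₓ`, so the sign-flip symmetry makes its expectation vanish,
leaving `a² E[T²] + b² E[A²]`.
-/

open MeasureTheory

noncomputable def leakyRelu (γ t : ℝ) : ℝ := max t (γ * t)

theorem leakyRelu_eq_add_abs (γ t : ℝ) :
    leakyRelu γ t = (1 + γ) / 2 * t + |1 - γ| / 2 * |t| := by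
  rcases le_total t 0 with ht | ht <;> rcases le_total γ 1 with hγ | hγ
  · rw [leakyRelu, abs_of_nonpos ht, abs_of_nonneg (sub_nonneg.2 hγ),
      max_eq_right (by nlinarith)]; ring
  · rw [leakyRelu, abs_of_nonpos ht, abs_of_nonpos (sub_nonpos.2 hγ),
      max_eq_left (by nlinarith)]; ring
  · rw [leakyRelu, abs_of_nonneg ht, abs_of_nonneg (sub_nonneg.2 hγ),
      max_eq_left (by nlinarith)]; ring
  · rw [leakyRelu, abs_of_nonneg ht, abs_of_nonpos (sub_nonpos.2 hγ),
      max_eq_right (by nlinarith)]; ring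

theorem Finset.sum_sum_mul_mul_mul_eq_sq {ι R : Type*} [CommSemiring R] (S : Finset ι)
    (c g : ι → R) :
    ∑ x ∈ S, ∑ y ∈ S, c x * c y * g x * g y = (∑ x ∈ S, c x * g x) ^ 2 := by
  rw [sq, Finset.sum_mul_sum]
  exact Finset.sum_congr rfl fun x _ => Finset.sum_congr rfl fun y _ => by ring

theorem integral_comp_eq_zero_of_map_eq_map_neg {Ω E : Type*} [MeasurableSpace Ω]
    {μ : Measure Ω} [MeasurableSpace E] [Neg E] [MeasurableNeg E] {X : Ω → E}
    (hX : AEMeasurable X μ) (hsym : μ.map X = μ.map (fun ω => -X ω))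
    {g : E → ℝ} (hg : Measurable g) (hodd : ∀ v, g (-v) = -g v) :
    ∫ ω, g (X ω) ∂μ = 0 := by
  have hflip : ∫ ω, g (X ω) ∂μ = ∫ ω, g (-X ω) ∂μ := by
    rw [← integral_map hX hg.aestronglyMeasurable, hsym,
      integral_map (φ := fun ω => -X ω) hX.neg hg.aestronglyMeasurable]
  simp only [hodd, integral_neg] at hflip
  linarith

theorem integral_add_sq_of_integral_mul_eq_zero {Ω : Type*} [MeasurableSpace Ω]
    {μ : Measure Ω} {T A : Ω → ℝ} (hT : MemLp T 2 μ) (hA : MemLp A 2 μ)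
    (horth : ∫ ω, T ω * A ω ∂μ = 0) (a b : ℝ) :
    ∫ ω, (a * T ω + b * A ω) ^ 2 ∂μ
      = a ^ 2 * ∫ ω, T ω ^ 2 ∂μ + b ^ 2 * ∫ ω, A ω ^ 2 ∂μ := by
  have hT2 : Integrable (fun ω => a ^ 2 * T ω ^ 2) μ := hT.integrable_sq.const_mul _
  have hA2 : Integrable (fun ω => b ^ 2 * A ω ^ 2) μ := hA.integrable_sq.const_mul _
  have hTA : Integrable (fun ω => 2 * a * b * (T ω * A ω)) μ :=
    (memLp_one_iff_integrable.mp (hA.smul (r := 1) hT)).const_mul _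
  calc ∫ ω, (a * T ω + b * A ω) ^ 2 ∂μ
      = ∫ ω, a ^ 2 * T ω ^ 2 + 2 * a * b * (T ω * A ω) + b ^ 2 * A ω ^ 2 ∂μ := by
        congr 1 with ω; ring
    _ = a ^ 2 * ∫ ω, T ω ^ 2 ∂μ + 2 * a * b * ∫ ω, T ω * A ω ∂μ
          + b ^ 2 * ∫ ω, A ω ^ 2 ∂μ := by
        rw [integral_add (f := fun ω => a ^ 2 * T ω ^ 2 + 2 * a * b * (T ω * A ω))
            (hT2.add hTA) hA2, integral_add hT2 hTA,
          integral_const_mul, integral_const_mul, integral_const_mul]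
    _ = a ^ 2 * ∫ ω, T ω ^ 2 ∂μ + b ^ 2 * ∫ ω, A ω ^ 2 ∂μ := by
        rw [horth]; ring

theorem leakyRelu_signed_second_moment_general
    {Ω : Type*} [MeasurableSpace Ω] (μ : Measure Ω)
    (n : ℕ) (f : (Fin n → Bool) → Ω → ℝ)
    (hf : ∀ x, MemLp (f x) 2 μ)
    (hsym : Measure.map (fun ω => fun x => f x ω) μ
      = Measure.map (fun ω => fun x => -f x ω) μ)
    (γ : ℝ) (s : (Fin n → Bool) → ℝ) :
    (∫ ω, ∑ x : Fin n → Bool, ∑ y : Fin n → Bool,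
        s x * s y * leakyRelu γ (f x ω) * leakyRelu γ (f y ω) ∂μ
      = (1 + γ) ^ 2 / 4 * ∫ ω, ∑ x : Fin n → Bool, ∑ y : Fin n → Bool,
          s x * s y * f x ω * f y ω ∂μ
        + (1 - γ) ^ 2 / 4 * ∫ ω, (∑ x : Fin n → Bool, s x * |f x ω|) ^ 2 ∂μ) ∧
    ((1 + γ) ^ 2 / 4 * ∫ ω, ∑ x : Fin n → Bool, ∑ y : Fin n → Bool,
        s x * s y * f x ω * f y ω ∂μ
      ≤ ∫ ω, ∑ x : Fin n → Bool, ∑ y : Fin n → Bool,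
          s x * s y * leakyRelu γ (f x ω) * leakyRelu γ (f y ω) ∂μ) := by
  set T : Ω → ℝ := fun ω => ∑ x, s x * f x ω
  set A : Ω → ℝ := fun ω => ∑ x, s x * |f x ω|
  have hT : MemLp T 2 μ := memLp_finsetSum _ fun x _ => (hf x).const_mul (s x)
  have hA : MemLp A 2 μ := memLp_finsetSum _ fun x _ => (hf x).abs.const_mul (s x)
  have horth : ∫ ω, T ω * A ω ∂μ = 0 :=
    integral_comp_eq_zero_of_map_eq_map_neg
      (aemeasurable_pi_lambda _ fun x => (hf x).aestronglyMeasurable.aemeasurable) hsym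
      (g := fun v => (∑ x, s x * v x) * ∑ x, s x * |v x|) (by fun_prop)
      fun v => by simp only [Pi.neg_apply, abs_neg, mul_neg, Finset.sum_neg_distrib, neg_mul]
  have hsum : ∀ ω,
      ∑ x, s x * leakyRelu γ (f x ω) = (1 + γ) / 2 * T ω + |1 - γ| / 2 * A ω := fun ω => by
    simp only [T, A, Finset.mul_sum, ← Finset.sum_add_distrib, leakyRelu_eq_add_abs]
    exact Finset.sum_congr rfl fun x _ => by ring
  have hmain :=
    integral_add_sq_of_integral_mul_eq_zero hT hA horth ((1 + γ) / 2) (|1 - γ| / 2)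
  simp only [← hsum, div_pow, sq_abs] at hmain
  simp only [Finset.sum_sum_mul_mul_mul_eq_sq, hmain]
  refine ⟨by ring, ?_⟩
  have hA2 : 0 ≤ ∫ ω, A ω ^ 2 ∂μ := integral_nonneg fun ω => sq_nonneg _
  nlinarith

/-- Let `(f_x)_{x ∈ {0,1}^n}` be square-integrable real random variables
whose joint law is invariant under simultaneous sign flip, `γ ∈ ℝ`, and `s : {0,1}^n → {±1}`
a sign function. Then
`E[∑_{x,y} s(x)s(y) R_γ(f_x) R_γ(f_y)] = ((1+γ)²/4) E[∑_{x,y} s(x)s(y) f_x f_y]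
 + ((1-γ)²/4) E[(∑_x s(x)|f_x|)²]`, and in particular the left-hand side is at least
`((1+γ)²/4) E[∑_{x,y} s(x)s(y) f_x f_y]`. -/
theorem leakyRelu_signed_second_moment
    {Ω : Type*} [MeasurableSpace Ω] (μ : Measure Ω) [IsProbabilityMeasure μ]
    (n : ℕ) (f : (Fin n → Bool) → Ω → ℝ)
    (hf : ∀ x, MemLp (f x) 2 μ)
    (hsym : Measure.map (fun ω => fun x => f x ω) μ
      = Measure.map (fun ω => fun x => -f x ω) μ)
    (γ : ℝ) (s : (Fin n → Bool) → ℝ) (hs : ∀ x, s x = 1 ∨ s x = -1) :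
    (∫ ω, ∑ x : Fin n → Bool, ∑ y : Fin n → Bool,
        s x * s y * leakyRelu γ (f x ω) * leakyRelu γ (f y ω) ∂μ
      = (1 + γ) ^ 2 / 4 * ∫ ω, ∑ x : Fin n → Bool, ∑ y : Fin n → Bool,
          s x * s y * f x ω * f y ω ∂μ
        + (1 - γ) ^ 2 / 4 * ∫ ω, (∑ x : Fin n → Bool, s x * |f x ω|) ^ 2 ∂μ) ∧
    ((1 + γ) ^ 2 / 4 * ∫ ω, ∑ x : Fin n → Bool, ∑ y : Fin n → Bool,
        s x * s y * f x ω * f y ω ∂μ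
      ≤ ∫ ω, ∑ x : Fin n → Bool, ∑ y : Fin n → Bool,
          s x * s y * leakyRelu γ (f x ω) * leakyRelu γ (f y ω) ∂μ) :=
  leakyRelu_signed_second_moment_general μ n f hf hsym γ s
end

section
/- For every real p ∈ [0,1] and every natural number n ≥ 1, (1 − (15/16)p)^n ≤ (1 − (3/4)p)^{5n/4}. -/
/-- For every `p ∈ [0,1]` and every natural `n ≥ 1`,
`(1 - (15/16)p)^n ≤ (1 - (3/4)p)^{5n/4}` (real powers). -/
theorem pow_fifteen_sixteenths_le (p : ℝ) (hp0 : 0 ≤ p) (hp1 : p ≤ 1) (n : ℕ)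
    (hn : 1 ≤ n) :
    (1 - 15 / 16 * p) ^ (n : ℝ) ≤ (1 - 3 / 4 * p) ^ (5 * (n : ℝ) / 4) := by
  have ha : (0:ℝ) ≤ 1 - 15 / 16 * p := by linarith
  have hb : (0:ℝ) ≤ 1 - 3 / 4 * p := by linarith
  have key : (1 - 15 / 16 * p) ^ (4:ℕ) ≤ (1 - 3 / 4 * p) ^ (5:ℕ) := by
    nlinarith [sq_nonneg p, sq_nonneg (p - 1), sq_nonneg (p * (p-1)), mul_nonneg hp0 hp0,
      mul_nonneg (mul_nonneg hp0 hp0) hp0, sq_nonneg (p*p), mul_nonneg hp0 (sq_nonneg (p-1))]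
  have h4 : (n : ℝ) = 4 * ((n : ℝ) / 4) := by ring
  have h5 : 5 * (n : ℝ) / 4 = 5 * ((n : ℝ) / 4) := by ring
  have hd : (0:ℝ) ≤ (n : ℝ) / 4 := by positivity
  calc (1 - 15 / 16 * p) ^ (n : ℝ)
      = ((1 - 15 / 16 * p) ^ (4:ℕ)) ^ ((n:ℝ)/4) := by
        rw [← Real.rpow_natCast (1 - 15/16*p) 4, ← Real.rpow_mul ha]
        norm_num [h4.symm]
    _ ≤ ((1 - 3 / 4 * p) ^ (5:ℕ)) ^ ((n:ℝ)/4) :=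
        Real.rpow_le_rpow (by positivity) key hd
    _ = (1 - 3 / 4 * p) ^ (5 * (n : ℝ) / 4) := by
        rw [← Real.rpow_natCast (1 - 3/4*p) 5, ← Real.rpow_mul hb]
        norm_num [h5.symm]
end

section
/- Let X be a binomial random variable with parameters n ≥ 1 and p ∈ [0,1], and set h = (1 − (3/4)p)^n. Then E[(1/4)^X] = h, E[(1/16)^X] = (1 − (15/16)p)^n, and consequently Var[(1/4)^X] = (1 − (15/16)p)^n − h² ≤ h^{5/4} − h². -/
/-!
Summing `c ^ k` against the binomial weights is the binomial theorem: `E[c ^ X] = (c p + 1 - p) ^ n`.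
With `c = 1/4` and `c = 1/16 = (1/4)^2` this gives both moments and hence the variance. The bound
is Bernoulli's inequality `1 - (15/16) p ≤ (1 - (3/4) p) ^ (5/4)` raised to the `n`-th power.
-/

open MeasureTheory ProbabilityTheory

section

variable {Ω : Type*} [MeasurableSpace Ω] {μ : Measure Ω} {n : ℕ} {p : ℝ} {X : Ω → ℕ}

lemma ae_le_of_binomial
    (hdist : ∀ k : ℕ, μ (X ⁻¹' {k})
      = ENNReal.ofReal ((n.choose k : ℝ) * p ^ k * (1 - p) ^ (n - k))) :
    ∀ᵐ ω ∂μ, X ω ≤ n := by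
  rw [ae_iff]
  have hsub : {ω | ¬X ω ≤ n} ⊆ ⋃ k : ℕ, X ⁻¹' {n + 1 + k} := fun ω hω =>
    Set.mem_iUnion.2 ⟨X ω - (n + 1), by simp only [Set.mem_ofPred_eq] at hω; simp; omega⟩
  refine measure_mono_null hsub (measure_iUnion_null fun k => ?_)
  simp [hdist, Nat.choose_eq_zero_of_lt (show n < n + 1 + k by omega)]

lemma measureReal_preimage_singleton_of_binomial (hp0 : 0 ≤ p) (hp1 : p ≤ 1)
    (hdist : ∀ k : ℕ, μ (X ⁻¹' {k})
      = ENNReal.ofReal ((n.choose k : ℝ) * p ^ k * (1 - p) ^ (n - k))) (k : ℕ) :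
    μ.real (X ⁻¹' {k}) = n.choose k * p ^ k * (1 - p) ^ (n - k) := by
  have h1p : 0 ≤ 1 - p := sub_nonneg.2 hp1
  rw [measureReal_def, hdist, ENNReal.toReal_ofReal (by positivity)]

lemma integral_pow_of_binomial [IsFiniteMeasure μ] (hp0 : 0 ≤ p) (hp1 : p ≤ 1) (hX : Measurable X)
    (hdist : ∀ k : ℕ, μ (X ⁻¹' {k})
      = ENNReal.ofReal ((n.choose k : ℝ) * p ^ k * (1 - p) ^ (n - k))) (c : ℝ) :
    ∫ ω, c ^ X ω ∂μ = (c * p + (1 - p)) ^ n := by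
  have hmeas (k : ℕ) : MeasurableSet (X ⁻¹' {k}) := hX (measurableSet_singleton k)
  have hsum : (fun ω => c ^ X ω) =ᵐ[μ]
      fun ω => ∑ k ∈ Finset.range (n + 1), (X ⁻¹' {k}).indicator (fun _ => c ^ k) ω := by
    filter_upwards [ae_le_of_binomial hdist] with ω hω
    rw [Finset.sum_eq_single_of_mem (X ω) (Finset.mem_range.2 (by omega))
      fun k _ hk => by simp [Ne.symm hk]]
    simp
  rw [integral_congr_ae hsum,
    integral_finsetSum _ fun k _ => (integrable_const _).indicator (hmeas k), add_pow]
  refine Finset.sum_congr rfl fun k _ => ?_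
  rw [integral_indicator_const _ (hmeas k),
    measureReal_preimage_singleton_of_binomial hp0 hp1 hdist, smul_eq_mul]
  ring

lemma memLp_pow_of_binomial [IsFiniteMeasure μ] (hX : Measurable X)
    (hdist : ∀ k : ℕ, μ (X ⁻¹' {k})
      = ENNReal.ofReal ((n.choose k : ℝ) * p ^ k * (1 - p) ^ (n - k))) (c : ℝ) (q : ENNReal) :
    MemLp (fun ω => c ^ X ω) q μ := by
  refine MemLp.of_bound ((measurable_from_top.comp hX).aestronglyMeasurable) (max 1 |c| ^ n) ?_
  filter_upwards [ae_le_of_binomial hdist] with ω hω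
  rw [norm_pow, Real.norm_eq_abs]
  exact (pow_le_pow_left₀ (abs_nonneg c) (le_max_right 1 |c|) _).trans
    (pow_le_pow_right₀ (le_max_left 1 |c|) hω)

lemma variance_pow_of_binomial [IsProbabilityMeasure μ] (hp0 : 0 ≤ p) (hp1 : p ≤ 1)
    (hX : Measurable X)
    (hdist : ∀ k : ℕ, μ (X ⁻¹' {k})
      = ENNReal.ofReal ((n.choose k : ℝ) * p ^ k * (1 - p) ^ (n - k))) (c : ℝ) :
    variance (fun ω => c ^ X ω) μ = (c ^ 2 * p + (1 - p)) ^ n - ((c * p + (1 - p)) ^ n) ^ 2 := by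
  have hsq : (fun ω => c ^ X ω) ^ 2 = fun ω => (c ^ 2) ^ X ω := by
    ext ω; simp only [Pi.pow_apply, ← pow_mul, mul_comm]
  rw [variance_eq_sub (memLp_pow_of_binomial hX hdist c 2), hsq,
    integral_pow_of_binomial hp0 hp1 hX hdist, integral_pow_of_binomial hp0 hp1 hX hdist]

end

theorem binomial_quarter_pow_moments_general
    {Ω : Type*} [MeasurableSpace Ω] (μ : Measure Ω) [IsProbabilityMeasure μ]
    (n : ℕ) (p : ℝ) (hp0 : 0 ≤ p) (hp1 : p ≤ 1)
    (X : Ω → ℕ) (hX : Measurable X)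
    (hdist : ∀ k : ℕ, μ (X ⁻¹' {k})
      = ENNReal.ofReal ((n.choose k : ℝ) * p ^ k * (1 - p) ^ (n - k))) :
    (∫ ω, (1 / 4 : ℝ) ^ X ω ∂μ = (1 - 3 / 4 * p) ^ n) ∧
    (∫ ω, (1 / 16 : ℝ) ^ X ω ∂μ = (1 - 15 / 16 * p) ^ n) ∧
    variance (fun ω => (1 / 4 : ℝ) ^ X ω) μ
      = (1 - 15 / 16 * p) ^ n - ((1 - 3 / 4 * p) ^ n) ^ 2 ∧
    variance (fun ω => (1 / 4 : ℝ) ^ X ω) μ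
      ≤ ((1 - 3 / 4 * p) ^ n) ^ ((5 : ℝ) / 4) - ((1 - 3 / 4 * p) ^ n) ^ 2 := by
  have hvar : variance (fun ω => (1 / 4 : ℝ) ^ X ω) μ
      = (1 - 15 / 16 * p) ^ n - ((1 - 3 / 4 * p) ^ n) ^ 2 := by
    rw [variance_pow_of_binomial hp0 hp1 hX hdist]; ring_nf
  have hbernoulli : 1 - 15 / 16 * p ≤ (1 - 3 / 4 * p) ^ ((5 : ℝ) / 4) := by
    have h := one_add_mul_self_le_rpow_one_add (s := -(3 / 4 * p)) (by linarith)
      (p := 5 / 4) (by norm_num)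
    rw [← sub_eq_add_neg] at h
    linarith
  have hpow : (1 - 15 / 16 * p) ^ n ≤ ((1 - 3 / 4 * p) ^ n) ^ ((5 : ℝ) / 4) := by
    rw [← Real.rpow_pow_comm (by linarith)]
    exact pow_le_pow_left₀ (by linarith) hbernoulli n
  refine ⟨?_, ?_, hvar, hvar ▸ sub_le_sub_right hpow _⟩
  · rw [integral_pow_of_binomial hp0 hp1 hX hdist]; ring_nf
  · rw [integral_pow_of_binomial hp0 hp1 hX hdist]; ring_nf

/-- Let `X` be a binomial random variable with parameters `n ≥ 1` and
`p ∈ [0,1]`, and set `h = (1 - (3/4)p)^n`. Then `E[(1/4)^X] = h`,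
`E[(1/16)^X] = (1 - (15/16)p)^n`, and consequently
`Var[(1/4)^X] = (1 - (15/16)p)^n - h² ≤ h^{5/4} - h²`. -/
theorem binomial_quarter_pow_moments
    {Ω : Type*} [MeasurableSpace Ω] (μ : Measure Ω) [IsProbabilityMeasure μ]
    (n : ℕ) (hn : 1 ≤ n) (p : ℝ) (hp0 : 0 ≤ p) (hp1 : p ≤ 1)
    (X : Ω → ℕ) (hX : Measurable X)
    (hdist : ∀ k : ℕ, μ (X ⁻¹' {k})
      = ENNReal.ofReal ((n.choose k : ℝ) * p ^ k * (1 - p) ^ (n - k))) :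
    (∫ ω, (1 / 4 : ℝ) ^ X ω ∂μ = (1 - 3 / 4 * p) ^ n) ∧
    (∫ ω, (1 / 16 : ℝ) ^ X ω ∂μ = (1 - 15 / 16 * p) ^ n) ∧
    variance (fun ω => (1 / 4 : ℝ) ^ X ω) μ
      = (1 - 15 / 16 * p) ^ n - ((1 - 3 / 4 * p) ^ n) ^ 2 ∧
    variance (fun ω => (1 / 4 : ℝ) ^ X ω) μ
      ≤ ((1 - 3 / 4 * p) ^ n) ^ ((5 : ℝ) / 4) - ((1 - 3 / 4 * p) ^ n) ^ 2 :=
  binomial_quarter_pow_moments_general μ n p hp0 hp1 X hX hdist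
end
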